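/- The ECTA enumeration step relation terminates: there is no infinite sequence of enumeration states σ₀ → σ₁ → σ₂ → … under the rules Choose, Suspend-1, Suspend-2, and Subst. -/

import Mathlib

universe u
variable {S : Type u}

/-- Terms over a signature. -/
inductive Term (S : Type u) where
  | mk : S → List (Term S) → Term S

def Term.child : Term S → ℕ → Option (Term S)
  | .mk _ ts, i => ts[i]?

def subAt : List ℕ → Term S → Option (Term S)
  | [], t => some t
  | i :: p, t => (t.child i).bind (subAt p)

/-- Satisfaction of a path equivalence class. -/
def pecSat (c : Set (List ℕ)) (t : Term S) : Prop :=
  ∃ t', ∀ p ∈ c, subAt p t = some t'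

mutual
/-- ECTA nodes. -/
inductive Node (S : Type u) where
  | mk : List (Edge S) → Node S
/-- ECTA transitions, each carrying a single path equivalence class, as in
the formal enumeration rules; `bot` is the empty transition. -/
inductive Edge (S : Type u) where
  | mk : S → List (Node S) → Set (List ℕ) → Edge S
  | bot : Edge S
end

/-- Consistency of a PEC. -/
def Consistent (S : Type u) (c : Set (List ℕ)) : Prop :=
  ∃ t : Term S, pecSat c t

open Classical in
mutual
noncomputable def interN : Node S → Node S → Node S
  | .mk es₁, .mk es₂ => .mk (interEdges es₁ es₂)
  termination_by n₁ n₂ => sizeOf n₁ + sizeOf n₂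
noncomputable def interEdges : List (Edge S) → List (Edge S) → List (Edge S)
  | [], _ => []
  | e :: es, es₂ => interEdgeList e es₂ ++ interEdges es es₂
  termination_by es₁ es₂ => sizeOf es₁ + sizeOf es₂
noncomputable def interEdgeList : Edge S → List (Edge S) → List (Edge S)
  | _, [] => []
  | e₁, e₂ :: es => interE e₁ e₂ :: interEdgeList e₁ es
  termination_by e es => sizeOf e + sizeOf es
noncomputable def interE : Edge S → Edge S → Edge S
  | .bot, _ => .bot
  | .mk _ _ _, .bot => .bot
  | .mk s₁ ns₁ c₁, .mk s₂ ns₂ c₂ =>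
    if s₁ = s₂ ∧ ns₁.length = ns₂.length ∧ Consistent S (c₁ ∪ c₂)
    then .mk s₁ (interNodes ns₁ ns₂) (c₁ ∪ c₂)
    else .bot
  termination_by e₁ e₂ => sizeOf e₁ + sizeOf e₂
noncomputable def interNodes : List (Node S) → List (Node S) → List (Node S)
  | [], _ => []
  | _ :: _, [] => []
  | n₁ :: ns₁, n₂ :: ns₂ => interN n₁ n₂ :: interNodes ns₁ ns₂
  termination_by ns₁ ns₂ => sizeOf ns₁ + sizeOf ns₂
  decreasing_by all_goals (simp; omega)
end

/-- Partially-enumerated terms (p-terms): variables, symbol applications,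
and unenumerated ECTA nodes annotated with constraint fragments
(a PEC together with a variable). -/
inductive PTerm (S : Type u) where
  | var : ℕ → PTerm S
  | app : S → List (PTerm S) → PTerm S
  | unode : Node S → List (Set (List ℕ) × ℕ) → PTerm S

/-- Contexts: p-terms with a single hole under applications. -/
inductive Ctx (S : Type u) where
  | hole : Ctx S
  | app : S → List (PTerm S) → Ctx S → List (PTerm S) → Ctx S

/-- Plug a p-term into a context. -/
def Ctx.fill : Ctx S → PTerm S → PTerm S
  | .hole, τ => τ
  | .app s l k r, τ => .app s (l ++ [k.fill τ] ++ r)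

/-- Substitute variable `a` for variable `b` in a p-term (both in `var`
occurrences and in constraint fragments). -/
def substV (a b : ℕ) : PTerm S → PTerm S
  | .var v => .var (if v = b then a else v)
  | .app s ts => .app s (ts.attach.map (fun τ => substV a b τ.1))
  | .unode n Φ => .unode n (Φ.map (fun q => (q.1, if q.2 = b then a else q.2)))
decreasing_by
  have := List.sizeOf_lt_of_mem τ.2
  simp at *; omega

/-- Projecting a path down to the `i`-th child: keep paths starting with
`i`, stripping the head. -/
def projPath (i : ℕ) (c : Set (List ℕ)) : Set (List ℕ) := {p | i :: p ∈ c}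

open Classical in
/-- Projecting a set of constraint fragments down to the `i`-th child,
dropping fragments whose projected PEC is empty. -/
noncomputable def projFrags (Φ : List (Set (List ℕ) × ℕ)) (i : ℕ) :
    List (Set (List ℕ) × ℕ) :=
  Φ.filterMap (fun q =>
    if projPath i q.1 = ∅ then none else some (projPath i q.1, q.2))

/-- `v` occurs in a constraint fragment somewhere inside the p-term. -/
inductive HasFragVar : PTerm S → ℕ → Prop where
  | app {s : S} {ts : List (PTerm S)} {τ : PTerm S} {v : ℕ} :
      τ ∈ ts → HasFragVar τ v → HasFragVar (.app s ts) v
  | frag {n : Node S} {Φ : List (Set (List ℕ) × ℕ)} {q : Set (List ℕ) × ℕ} {v : ℕ} :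
      q ∈ Φ → q.2 = v → HasFragVar (.unode n Φ) v

/-- `v` occurs anywhere inside the p-term (as a variable or in a constraint
fragment). -/
inductive UsesVar : PTerm S → ℕ → Prop where
  | var {v : ℕ} : UsesVar (.var v) v
  | app {s : S} {ts : List (PTerm S)} {τ : PTerm S} {v : ℕ} :
      τ ∈ ts → UsesVar τ v → UsesVar (.app s ts) v
  | frag {n : Node S} {Φ : List (Set (List ℕ) × ℕ)} {q : Set (List ℕ) × ℕ} {v : ℕ} :
      q ∈ Φ → q.2 = v → UsesVar (.unode n Φ) v

/-- Enumeration states: partial maps from variables to p-terms. -/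
def EState (S : Type u) := ℕ → Option (PTerm S)

/-- A variable is solved if it is mentioned in no constraint fragment of the
state. -/
def Solved (σ : EState S) (v : ℕ) : Prop :=
  ∀ w τ, σ w = some τ → ¬ HasFragVar τ v

/-- A variable is fresh for a state: unbound and not occurring anywhere. -/
def FreshIn (σ : EState S) (v : ℕ) : Prop :=
  σ v = none ∧ ∀ w τ, σ w = some τ → ¬ UsesVar τ v

/-- The Choose-□ rule on p-terms: replace an unenumerated node (with no
ε-fragment) by the symbol of one of its transitions applied to the child
nodes, with the transition's constraint (tagged with the fresh variable `v`)
and the existing fragments projected down to each child. -/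
inductive ChooseBox (v : ℕ) : PTerm S → PTerm S → Prop where
  | intro {es : List (Edge S)} {s : S} {ns : List (Node S)}
      {c : Set (List ℕ)} {Φ : List (Set (List ℕ) × ℕ)} :
      Edge.mk s ns c ∈ es →
      (∀ q ∈ Φ, ([] : List ℕ) ∉ q.1) →
      ChooseBox v (.unode (.mk es) Φ)
        (.app s (ns.mapIdx (fun i n => PTerm.unode n (projFrags ((c, v) :: Φ) i))))

/-- One enumeration step: the rules Choose, Suspend-1, Suspend-2, Subst. -/
inductive Step : EState S → EState S → Prop where
  | choose {σ : EState S} {v w : ℕ} {K : Ctx S} {τ τ' : PTerm S} :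
      σ v = some (K.fill τ) →
      FreshIn σ w →
      ChooseBox w τ τ' →
      Solved σ v →
      Step σ (Function.update σ v (some (K.fill τ')))
  | suspend1 {σ : EState S} {v v' : ℕ} {K : Ctx S} {n : Node S}
      {Φ₁ Φ₂ : List (Set (List ℕ) × ℕ)} :
      σ v = some (K.fill (.unode n (Φ₁ ++ ({[]}, v') :: Φ₂))) →
      σ v' = none →
      Step σ
        (Function.update
          (Function.update σ v (some (K.fill (.var v'))))
          v' (some (.unode n (Φ₁ ++ Φ₂))))
  | suspend2 {σ : EState S} {v v' : ℕ} {K : Ctx S} {n n' : Node S}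
      {Φ₁ Φ₂ Φ' : List (Set (List ℕ) × ℕ)} :
      σ v = some (K.fill (.unode n (Φ₁ ++ ({[]}, v') :: Φ₂))) →
      σ v' = some (.unode n' Φ') →
      v ≠ v' →
      Step σ
        (Function.update
          (Function.update σ v (some (K.fill (.var v'))))
          v' (some (.unode (interN n n') ((Φ₁ ++ Φ₂) ++ Φ'))))
  | subst {σ : EState S} {v₁ v₂ : ℕ} :
      σ v₂ = some (.var v₁) →
      Step σ (fun w => if w = v₂ then none else (σ w).map (substV v₁ v₂))

section Aux
variable {S : Type u}

mutual
def heightN : Node S → ℕ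
  | .mk es => heightEs es + 1
  termination_by n => sizeOf n
def heightEs : List (Edge S) → ℕ
  | [] => 0
  | e :: es => max (heightE e) (heightEs es)
  termination_by es => sizeOf es
def heightE : Edge S → ℕ
  | .bot => 0
  | .mk _ ns _ => heightNs ns
  termination_by e => sizeOf e
def heightNs : List (Node S) → ℕ
  | [] => 0
  | n :: ns => max (heightN n) (heightNs ns)
  termination_by ns => sizeOf ns
end

theorem heightE_le {e : Edge S} {es : List (Edge S)} (h : e ∈ es) :
    heightE e ≤ heightEs es := by
  induction es with
  | nil => cases h
  | cons e' es ih =>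
    rw [heightEs]
    rcases List.mem_cons.1 h with rfl | h
    · exact le_max_left _ _
    · exact (ih h).trans (le_max_right _ _)

theorem heightN_le {n : Node S} {ns : List (Node S)} (h : n ∈ ns) :
    heightN n ≤ heightNs ns := by
  induction ns with
  | nil => cases h
  | cons n' ns ih =>
    rw [heightNs]
    rcases List.mem_cons.1 h with rfl | h
    · exact le_max_left _ _
    · exact (ih h).trans (le_max_right _ _)

theorem heightN_child_lt {s : S} {ns : List (Node S)} {c : Set (List ℕ)}
    {es : List (Edge S)} {n : Node S} (he : Edge.mk s ns c ∈ es) (hn : n ∈ ns) :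
    heightN n < heightN (.mk es) := by
  rw [heightN]
  have h1 : heightN n ≤ heightNs ns := heightN_le hn
  have h2 : heightE (Edge.mk s ns c) ≤ heightEs es := heightE_le he
  rw [heightE] at h2
  omega

theorem heightEs_append (l₁ l₂ : List (Edge S)) :
    heightEs (l₁ ++ l₂) = max (heightEs l₁) (heightEs l₂) := by
  induction l₁ with
  | nil => simp [heightEs]
  | cons e es ih => rw [List.cons_append, heightEs, heightEs, ih, max_assoc]

mutual
theorem interN_height : ∀ n₁ n₂ : Node S, heightN (interN n₁ n₂) ≤ heightN n₁
  | .mk es₁, .mk es₂ => by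
    rw [interN, heightN, heightN]
    exact Nat.add_le_add_right (interEdges_height es₁ es₂) 1
  termination_by n₁ n₂ => sizeOf n₁ + sizeOf n₂
theorem interEdges_height : ∀ es₁ es₂ : List (Edge S),
    heightEs (interEdges es₁ es₂) ≤ heightEs es₁
  | [], es₂ => by rw [interEdges]
  | e :: es, es₂ => by
    rw [interEdges, heightEs, heightEs_append]
    exact max_le_max (interEdgeList_height e es₂) (interEdges_height es es₂)
  termination_by es₁ es₂ => sizeOf es₁ + sizeOf es₂
theorem interEdgeList_height : ∀ (e : Edge S) (es : List (Edge S)),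
    heightEs (interEdgeList e es) ≤ heightE e
  | e, [] => by rw [interEdgeList]; simp [heightEs]
  | e₁, e₂ :: es => by
    rw [interEdgeList, heightEs]
    exact max_le (interE_height e₁ e₂) (interEdgeList_height e₁ es)
  termination_by e es => sizeOf e + sizeOf es
theorem interE_height : ∀ e₁ e₂ : Edge S, heightE (interE e₁ e₂) ≤ heightE e₁
  | .bot, e₂ => by rw [interE]
  | .mk s₁ ns₁ c₁, .bot => by rw [interE]; simp [heightE]
  | .mk s₁ ns₁ c₁, .mk s₂ ns₂ c₂ => by
    rw [interE]
    split
    · rw [heightE, heightE]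
      exact interNodes_height ns₁ ns₂
    · rw [heightE]; exact Nat.zero_le _
  termination_by e₁ e₂ => sizeOf e₁ + sizeOf e₂
theorem interNodes_height : ∀ ns₁ ns₂ : List (Node S),
    heightNs (interNodes ns₁ ns₂) ≤ heightNs ns₁
  | [], _ => by rw [interNodes]
  | _ :: _, [] => by rw [interNodes]; simp [heightNs]
  | n₁ :: ns₁, n₂ :: ns₂ => by
    rw [interNodes, heightNs, heightNs]
    exact max_le_max (interN_height n₁ n₂) (interNodes_height ns₁ ns₂)
  termination_by ns₁ ns₂ => sizeOf ns₁ + sizeOf ns₂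
end

end Aux
section OrdAux

abbrev NatOrdinal : Type := Colex (ℕ →₀ ℕ)

noncomputable def wpow (h : ℕ) : NatOrdinal := toColex (Finsupp.single h 1)

theorem wpow_mono {h h' : ℕ} (hle : h ≤ h') : wpow h ≤ wpow h' :=
  Finsupp.Colex.single_le_iff.2 hle

/-- Key lemma: a finite sum of `wpow h_i` with all `h_i < H` is `< wpow H`. -/
theorem sum_wpow_lt {H : ℕ} (l : List NatOrdinal)
    (hl : ∀ x ∈ l, ∃ h, h < H ∧ x = wpow h) : l.sum < wpow H := by
  have key : ∀ l : List NatOrdinal, (∀ x ∈ l, ∃ h, h < H ∧ x = wpow h) →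
      ∀ j, H ≤ j → (ofColex l.sum) j = 0 := by
    intro l
    induction l with
    | nil => intro _ j _; rfl
    | cons x l ih =>
      intro hl j hj
      obtain ⟨h, hh, rfl⟩ := hl x List.mem_cons_self
      rw [List.sum_cons]
      show ((Finsupp.single h 1 + ofColex l.sum : ℕ →₀ ℕ) j) = 0
      rw [Finsupp.add_apply, ih (fun y hy => hl y (List.mem_cons_of_mem _ hy)) j hj,
        Finsupp.single_eq_of_ne (by omega)]
  show Finsupp.Lex (· > ·) (· < ·) (ofColex l.sum) (Finsupp.single H 1)
  refine ⟨H, fun d hd => ?_, ?_⟩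
  · rw [key l hl d (le_of_lt hd), Finsupp.single_eq_of_ne (by omega)]
  · rw [key l hl H le_rfl, Finsupp.single_eq_same]; exact Nat.zero_lt_one

theorem wpow_pos (h : ℕ) : 0 < wpow h := by
  simpa using sum_wpow_lt (H := h) [] (by simp)

theorem lt_add_of_pos_right' (a : NatOrdinal) {b : NatOrdinal} (hb : 0 < b) :
    a < a + b := by
  simpa using add_lt_add_left hb a

end OrdAux
section PTermMeasure
variable {S : Type u}

noncomputable def muA : PTerm S → NatOrdinal
  | .var _ => 0
  | .app _ ts => (ts.attach.map (fun τ => muA τ.1)).sum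
  | .unode n _ => wpow (heightN n)
decreasing_by
  have := List.sizeOf_lt_of_mem τ.2
  simp at *; omega

def muB : PTerm S → ℕ
  | .var _ => 0
  | .app _ ts => (ts.attach.map (fun τ => muB τ.1)).sum
  | .unode _ Φ => Φ.length
decreasing_by
  have := List.sizeOf_lt_of_mem τ.2
  simp at *; omega

def isVarT : PTerm S → ℕ
  | .var _ => 1
  | _ => 0

theorem muA_app (s : S) (ts : List (PTerm S)) :
    muA (.app s ts) = (ts.map muA).sum := by
  rw [muA, ← List.attach_map_val (l := ts) (f := muA)]

theorem muB_app (s : S) (ts : List (PTerm S)) :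
    muB (.app s ts) = (ts.map muB).sum := by
  rw [muB, ← List.attach_map_val (l := ts) (f := muB)]

noncomputable def ctxA : Ctx S → NatOrdinal
  | .hole => 0
  | .app _ l k r => (l.map muA).sum + ctxA k + (r.map muA).sum

def ctxB : Ctx S → ℕ
  | .hole => 0
  | .app _ l k r => (l.map muB).sum + ctxB k + (r.map muB).sum

theorem muA_fill (K : Ctx S) (τ : PTerm S) : muA (K.fill τ) = ctxA K + muA τ := by
  induction K with
  | hole => simp [Ctx.fill, ctxA]
  | app s l k r ih =>
    rw [Ctx.fill, muA_app, ctxA]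
    simp only [List.map_append, List.sum_append, List.map_cons, List.map_nil,
      List.sum_cons, List.sum_nil, ih]
    abel

theorem muB_fill (K : Ctx S) (τ : PTerm S) : muB (K.fill τ) = ctxB K + muB τ := by
  induction K with
  | hole => simp [Ctx.fill, ctxB]
  | app s l k r ih =>
    rw [Ctx.fill, muB_app, ctxB]
    simp only [List.map_append, List.sum_append, List.map_cons, List.map_nil,
      List.sum_cons, List.sum_nil, ih]
    omega

theorem muA_substV (a b : ℕ) : ∀ τ : PTerm S, muA (substV a b τ) = muA τ
  | .var v => by rw [substV, muA, muA]
  | .app s ts => by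
    rw [substV, muA_app, muA_app, List.map_map]
    congr 1
    rw [← List.attach_map_val (l := ts) (f := muA)]
    refine List.map_congr_left fun x _ => ?_
    show muA (substV a b x.1) = muA x.1
    exact muA_substV a b x.1
  | .unode n Φ => by rw [substV, muA, muA]
termination_by τ => sizeOf τ
decreasing_by
  have := List.sizeOf_lt_of_mem x.2
  simp at *; omega

theorem muB_substV (a b : ℕ) : ∀ τ : PTerm S, muB (substV a b τ) = muB τ
  | .var v => by rw [substV, muB, muB]
  | .app s ts => by
    rw [substV, muB_app, muB_app, List.map_map]
    congr 1
    rw [← List.attach_map_val (l := ts) (f := muB)]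
    refine List.map_congr_left fun x _ => ?_
    show muB (substV a b x.1) = muB x.1
    exact muB_substV a b x.1
  | .unode n Φ => by rw [substV, muB, muB]; simp
termination_by τ => sizeOf τ
decreasing_by
  have := List.sizeOf_lt_of_mem x.2
  simp at *; omega

theorem isVarT_substV (a b : ℕ) (τ : PTerm S) : isVarT (substV a b τ) = isVarT τ := by
  cases τ <;> rw [substV] <;> rfl

theorem muA_choose {v : ℕ} {τ τ' : PTerm S} (h : ChooseBox v τ τ') : muA τ' < muA τ := by
  rcases h with @⟨es, s, ns, c, Φ, he, -⟩
  rw [muA_app, muA]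
  refine sum_wpow_lt _ fun x hx => ?_
  rw [List.mem_map] at hx
  obtain ⟨y, hy, rfl⟩ := hx
  rw [List.mem_iff_get] at hy
  obtain ⟨⟨i, hi⟩, rfl⟩ := hy
  rw [List.get_eq_getElem, List.getElem_mapIdx]
  exact ⟨heightN (ns.get ⟨i, by simpa using hi⟩),
    heightN_child_lt he (List.get_mem _ _), by rw [muA]; rfl⟩

end PTermMeasure
section StateMeasure
variable {S : Type u}

noncomputable def oA : Option (PTerm S) → NatOrdinal := fun o => o.elim 0 muA
def oB : Option (PTerm S) → ℕ := fun o => o.elim 0 muB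
def oC : Option (PTerm S) → ℕ := fun o => o.elim 0 isVarT

theorem sum_split {M : Type*} [AddCommMonoid M] (g : Option (PTerm S) → M)
    (σ : EState S) {v : ℕ} {s : Finset ℕ} (hv : v ∈ s) :
    ∑ x ∈ s, g (σ x) = g (σ v) + ∑ x ∈ s.erase v, g (σ x) :=
  (Finset.add_sum_erase s (fun x => g (σ x)) hv).symm

theorem sum_update {M : Type*} [AddCommMonoid M] (g : Option (PTerm S) → M)
    (σ : EState S) {v : ℕ} (t : Option (PTerm S)) {s : Finset ℕ} (hv : v ∈ s) :
    ∑ x ∈ s, g (Function.update σ v t x) = g t + ∑ x ∈ s.erase v, g (σ x) := by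
  erw [sum_split (fun o => g o) (Function.update σ v t) hv, Function.update_self]
  congr 1
  refine Finset.sum_congr rfl fun x hx => ?_
  erw [Function.update_of_ne (Finset.ne_of_mem_erase hx)]

noncomputable def measure3 (s : Finset ℕ) (σ : EState S) : NatOrdinal × ℕ × ℕ :=
  (∑ v ∈ s, oA (σ v), ∑ v ∈ s, oB (σ v), ∑ v ∈ s, oC (σ v))

def lexLt (x y : NatOrdinal × ℕ × ℕ) : Prop :=
  x.1 < y.1 ∨ (x.1 = y.1 ∧ (x.2.1 < y.2.1 ∨ (x.2.1 = y.2.1 ∧ x.2.2 < y.2.2)))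

theorem measure3_subset (σ : EState S) {s s' : Finset ℕ} (hss : s ⊆ s')
    (hnone : ∀ v ∈ s', v ∉ s → σ v = none) : measure3 s' σ = measure3 s σ := by
  unfold measure3
  refine congrArg₂ _ ?_ (congrArg₂ _ ?_ ?_) <;>
    exact (Finset.sum_subset hss (fun x hx hxs => by rw [hnone x hx hxs]; rfl)).symm

theorem oA_map_substV (a b : ℕ) (o : Option (PTerm S)) :
    oA (o.map (substV a b)) = oA o := by
  cases o <;> simp [oA, muA_substV]

theorem oB_map_substV (a b : ℕ) (o : Option (PTerm S)) :
    oB (o.map (substV a b)) = oB o := by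
  cases o <;> simp [oB, muB_substV]

theorem oC_map_substV (a b : ℕ) (o : Option (PTerm S)) :
    oC (o.map (substV a b)) = oC o := by
  cases o <;> simp [oC, isVarT_substV]

@[simp] theorem oA_some (τ : PTerm S) : oA (some τ) = muA τ := rfl
@[simp] theorem oA_none : oA (none : Option (PTerm S)) = 0 := rfl
@[simp] theorem oB_some (τ : PTerm S) : oB (some τ) = muB τ := rfl
@[simp] theorem oB_none : oB (none : Option (PTerm S)) = 0 := rfl
@[simp] theorem oC_some (τ : PTerm S) : oC (some τ) = isVarT τ := rfl
@[simp] theorem oC_none : oC (none : Option (PTerm S)) = 0 := rfl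
@[simp] theorem muA_unode (n : Node S) (Φ) : muA (.unode n Φ) = wpow (heightN n) := by rw [muA]
@[simp] theorem muA_var (v : ℕ) : muA (.var v : PTerm S) = 0 := by rw [muA]
@[simp] theorem muB_unode (n : Node S) (Φ) : muB (.unode n Φ) = Φ.length := by rw [muB]
@[simp] theorem muB_var (v : ℕ) : muB (.var v : PTerm S) = 0 := by rw [muB]
@[simp] theorem isVarT_var (v : ℕ) : isVarT (.var v : PTerm S) = 1 := rfl

theorem sum_subst {M : Type*} [AddCommMonoid M] (g : Option (PTerm S) → M)
    (σ : EState S) {v₁ v₂ : ℕ} {s : Finset ℕ} (hvs : v₂ ∈ s)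
    (hg : ∀ o, g (Option.map (substV v₁ v₂) o) = g o) (hg0 : g none = 0) :
    ∑ x ∈ s, g (if x = v₂ then none else (σ x).map (substV v₁ v₂))
      = ∑ x ∈ s.erase v₂, g (σ x) := by
  rw [sum_split g (fun x => if x = v₂ then none else (σ x).map (substV v₁ v₂)) hvs]
  rw [if_pos rfl, hg0, zero_add]
  refine Finset.sum_congr rfl fun x hx => ?_
  rw [if_neg (Finset.ne_of_mem_erase hx), hg]

theorem step_decreases {σ σ' : EState S} (st : Step σ σ') (s : Finset ℕ)
    (hs : ∀ v, σ v ≠ none → v ∈ s) (hs' : ∀ v, σ' v ≠ none → v ∈ s) :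
    lexLt (measure3 s σ') (measure3 s σ) := by
  cases st with
  | @choose v w K τ τ' hv hw hcb _ =>
    have hvs : v ∈ s := hs v (by rw [hv]; exact Option.some_ne_none _)
    left
    show (∑ x ∈ s, oA _) < ∑ x ∈ s, oA (σ x)
    erw [sum_update oA σ _ hvs, sum_split oA σ hvs, hv]
    refine add_lt_add_left ?_ _
    show muA (K.fill τ') < muA (K.fill τ)
    rw [muA_fill, muA_fill]
    exact add_lt_add_right (muA_choose hcb) _
  | @suspend1 v v' K n Φ₁ Φ₂ hv hv' =>
    have hne : v ≠ v' := fun h => by rw [h, hv'] at hv; exact nomatch hv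
    have hvs : v ∈ s := hs v (by rw [hv]; exact Option.some_ne_none _)
    have hv's : v' ∈ s := by
      refine hs' v' ?_
      erw [Function.update_self]
      exact Option.some_ne_none _
    have hvs' : v ∈ s.erase v' := Finset.mem_erase.2 ⟨hne, hvs⟩
    right
    constructor
    · -- A equal
      show (∑ x ∈ s, oA _) = ∑ x ∈ s, oA (σ x)
      erw [sum_update oA _ _ hv's, sum_update oA σ _ hvs',
        sum_split oA σ hv's, sum_split oA σ hvs', hv, hv']
      simp only [oA_some, oA_none, muA_fill, muA_unode, muA_var]
      abel
    · left
      -- B decreases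
      show (∑ x ∈ s, oB _) < ∑ x ∈ s, oB (σ x)
      erw [sum_update oB _ _ hv's, sum_update oB σ _ hvs',
        sum_split oB σ hv's, sum_split oB σ hvs', hv, hv']
      simp only [oB_some, oB_none, muB_fill, muB_unode, muB_var, List.length_append,
        List.length_cons]
      omega
  | @suspend2 v v' K n n' Φ₁ Φ₂ Φ' hv hv' hne =>
    have hvs : v ∈ s := hs v (by rw [hv]; exact Option.some_ne_none _)
    have hv's : v' ∈ s := hs v' (by rw [hv']; exact Option.some_ne_none _)
    have hvs' : v ∈ s.erase v' := Finset.mem_erase.2 ⟨hne, hvs⟩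
    left
    show (∑ x ∈ s, oA _) < ∑ x ∈ s, oA (σ x)
    erw [sum_update oA _ _ hv's, sum_update oA σ _ hvs',
      sum_split oA σ hv's, sum_split oA σ hvs', hv, hv']
    simp only [oA_some, oA_none, muA_fill, muA_unode, muA_var]
    have h1 : wpow (heightN (interN n n')) ≤ wpow (heightN n) :=
      wpow_mono (interN_height n n')
    set R := ∑ x ∈ (s.erase v').erase v, oA (σ x) with hR
    calc wpow (heightN (interN n n')) + (ctxA K + 0 + R)
        ≤ wpow (heightN n) + (ctxA K + 0 + R) := add_le_add_left h1 _
      _ < (wpow (heightN n) + (ctxA K + 0 + R)) + wpow (heightN n') :=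
          lt_add_of_pos_right' _ (wpow_pos _)
      _ = wpow (heightN n') + (ctxA K + wpow (heightN n) + R) := by abel
  | @subst v₁ v₂ hv =>
    have hvs : v₂ ∈ s := hs v₂ (by rw [hv]; exact Option.some_ne_none _)
    right
    refine ⟨?_, Or.inr ⟨?_, ?_⟩⟩
    · show (∑ x ∈ s, oA _) = ∑ x ∈ s, oA (σ x)
      rw [sum_subst oA σ hvs (fun o => oA_map_substV v₁ v₂ o) oA_none, sum_split oA σ hvs, hv]
      simp
    · show (∑ x ∈ s, oB _) = ∑ x ∈ s, oB (σ x)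
      rw [sum_subst oB σ hvs (fun o => oB_map_substV v₁ v₂ o) oB_none, sum_split oB σ hvs, hv]
      simp
    · show (∑ x ∈ s, oC _) < ∑ x ∈ s, oC (σ x)
      rw [sum_subst oC σ hvs (fun o => oC_map_substV v₁ v₂ o) oC_none, sum_split oC σ hvs, hv]
      simp

end StateMeasure
section Final
variable {S : Type u}

theorem step_supp {σ σ' : EState S} (st : Step σ σ') :
    ∃ w, ∀ v, σ' v ≠ none → σ v ≠ none ∨ v = w := by
  cases st with
  | @choose v w K τ τ' hv hw hcb hsol =>
    refine ⟨v, fun x hx => ?_⟩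
    by_cases h : x = v
    · exact Or.inr h
    · erw [Function.update_of_ne h] at hx; exact Or.inl hx
  | @suspend1 v v' K n Φ₁ Φ₂ hv hv' =>
    refine ⟨v', fun x hx => ?_⟩
    by_cases h : x = v'
    · exact Or.inr h
    erw [Function.update_of_ne h] at hx
    by_cases h2 : x = v
    · subst h2; exact Or.inl (by rw [hv]; exact Option.some_ne_none _)
    · erw [Function.update_of_ne h2] at hx; exact Or.inl hx
  | @suspend2 v v' K n n' Φ₁ Φ₂ Φ' hv hv' hne =>
    refine ⟨v', fun x hx => ?_⟩
    by_cases h : x = v'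
    · exact Or.inr h
    erw [Function.update_of_ne h] at hx
    by_cases h2 : x = v
    · subst h2; exact Or.inl (by rw [hv]; exact Option.some_ne_none _)
    · erw [Function.update_of_ne h2] at hx; exact Or.inl hx
  | @subst v₁ v₂ hv =>
    refine ⟨v₂, fun x hx => ?_⟩
    by_cases h : x = v₂
    · exact Or.inr h
    · left
      simp only [if_neg h] at hx
      intro h0
      rw [h0] at hx
      exact hx rfl

end Final
/-- Termination of enumeration: starting from any enumeration state with
finitely many bindings, there is no infinite sequence of enumeration
steps. -/
theorem enumeration_terminates (f : ℕ → EState S)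
    (hfin : {v | f 0 v ≠ none}.Finite) :
    ¬ ∀ k, Step (f k) (f (k + 1)) := by
  intro hstep
  have hsupp : ∀ k, {v | f k v ≠ none}.Finite := by
    intro k
    induction k with
    | zero => exact hfin
    | succ k ih =>
      obtain ⟨w, hw⟩ := step_supp (hstep k)
      refine (ih.union (Set.finite_singleton w)).subset fun v hv => ?_
      rcases hw v hv with h | h
      · exact Set.mem_union_left _ h
      · exact Set.mem_union_right _ h
  have hmem : ∀ k v, f k v ≠ none → v ∈ (hsupp k).toFinset :=
    fun k v hv => (hsupp k).mem_toFinset.2 hv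
  set sf : ℕ → Finset ℕ := fun k => (hsupp k).toFinset with hsf
  set m : ℕ → NatOrdinal × ℕ × ℕ := fun k => measure3 (sf k) (f k) with hm
  have hdec : ∀ k, lexLt (m (k + 1)) (m k) := by
    intro k
    have e1 : measure3 (sf k ∪ sf (k + 1)) (f k) = m k :=
      measure3_subset (f k) Finset.subset_union_left
        (fun v _ hv => by by_contra h; exact hv (hmem k v h))
    have e2 : measure3 (sf k ∪ sf (k + 1)) (f (k + 1)) = m (k + 1) :=
      measure3_subset (f (k + 1)) Finset.subset_union_right
        (fun v _ hv => by by_contra h; exact hv (hmem (k + 1) v h))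
    rw [← e1, ← e2]
    exact step_decreases (hstep k) _
      (fun v hv => Finset.subset_union_left (hmem k v hv))
      (fun v hv => Finset.subset_union_right (hmem (k + 1) v hv))
  let g : ℕ → NatOrdinal ×ₗ (ℕ ×ₗ ℕ) :=
    fun k => toLex ((m k).1, toLex ((m k).2.1, (m k).2.2))
  have hg : ∀ k, g (k + 1) < g k := by
    intro k
    rcases hdec k with h | ⟨h1, h2 | ⟨h2, h3⟩⟩
    · exact Prod.Lex.lt_iff.2 (Or.inl h)
    · exact Prod.Lex.lt_iff.2
        (Or.inr ⟨h1, Prod.Lex.lt_iff.2 (Or.inl h2)⟩)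
    · exact Prod.Lex.lt_iff.2
        (Or.inr ⟨h1, Prod.Lex.lt_iff.2 (Or.inr ⟨h2, h3⟩)⟩)
  exact RelEmbedding.not_wellFounded
    (RelEmbedding.natGT g hg) wellFounded_lt
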